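/- Let η, η' > 0, let d, d' ≥ 1 be natural numbers, let Q ⊂ ℝ^d and Q' ⊂ ℝ^{d'} be nonempty bounded sets, and let Ψ : ℝ^d → ℝ^d and Ψ' : ℝ^{d'} → ℝ^{d'} be linear bijections with |Ψ(Q)| ≥ η diam(Ψ(Q))^d and |Ψ'(Q')| ≥ η' diam(Ψ'(Q'))^{d'}, where diam(Ψ(Q)) > 0 and diam(Ψ'(Q')) > 0. Define Ψ̃(x, y) = (r Ψ(x)/diam(Ψ(Q)), Ψ'(y)/diam(Ψ'(Q'))) with r² = d/d'. Then |Ψ̃(Q × Q')| ≥ η̃ · diam(Ψ̃(Q × Q'))^{d+d'}, where η̃ = η η' · d'^{d'/2} d^{d/2} / (d+d')^{(d+d')/2}. -/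

import Mathlib

/-!
Concatenation of coordinates `ℝ^m × ℝ^n → ℝ^(m+n)` is a volume-preserving isometry for the
Euclidean product metric, so the concatenation of `A` and `B` has volume `|A| |B|` and squared
diameter at most `diam A ^ 2 + diam B ^ 2`. The ratio `|X| / diam X ^ dim` is invariant under
dilations, so the rescaled sets `(r / diam Ψ(Q)) • Ψ(Q)` and `diam Ψ'(Q')⁻¹ • Ψ'(Q')`, of
diameters `r` and `1`, have volumes at least `η r^d` and `η'`. Hence `|Ψ̃(Q × Q')| ≥ η η' r^d`
while `diam Ψ̃(Q × Q') ^ 2 ≤ r ^ 2 + 1 = (d + d') / d'`.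
-/

open MeasureTheory Metric Pointwise

namespace EuclideanSpace

variable {m n : ℕ}

def append (a : EuclideanSpace ℝ (Fin m)) (b : EuclideanSpace ℝ (Fin n)) :
    EuclideanSpace ℝ (Fin (m + n)) :=
  WithLp.toLp 2 (Fin.append a.ofLp b.ofLp)

variable (m n) in
noncomputable def appendIsometry :
    WithLp 2 (EuclideanSpace ℝ (Fin m) × EuclideanSpace ℝ (Fin n)) ≃ₗᵢ[ℝ]
      EuclideanSpace ℝ (Fin (m + n)) :=
  (PiLp.sumPiLpEquivProdLpPiLp 2 fun _ => ℝ).symm.trans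
    (LinearIsometryEquiv.piLpCongrLeft 2 ℝ ℝ finSumFinEquiv)

theorem appendIsometry_toLp (a : EuclideanSpace ℝ (Fin m)) (b : EuclideanSpace ℝ (Fin n)) :
    appendIsometry m n (WithLp.toLp 2 (a, b)) = append a b := by
  ext i
  induction i using Fin.addCases <;> simp [appendIsometry, append]

theorem dist_append_sq (a a' : EuclideanSpace ℝ (Fin m)) (b b' : EuclideanSpace ℝ (Fin n)) :
    dist (append a b) (append a' b') ^ 2 = dist a a' ^ 2 + dist b b' ^ 2 := by
  rw [← appendIsometry_toLp, ← appendIsometry_toLp, LinearIsometryEquiv.dist_map,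
    WithLp.prod_dist_eq_of_L2, Real.sq_sqrt (by positivity)]
  rfl

theorem diam_image2_append_sq_le {A : Set (EuclideanSpace ℝ (Fin m))}
    {B : Set (EuclideanSpace ℝ (Fin n))} (hA : Bornology.IsBounded A)
    (hB : Bornology.IsBounded B) :
    diam (Set.image2 append A B) ^ 2 ≤ diam A ^ 2 + diam B ^ 2 := by
  refine (sq_le_sq₀ diam_nonneg (by positivity)).mpr ?_ |>.trans_eq (Real.sq_sqrt (by positivity))
  refine diam_le_of_forall_dist_le (Real.sqrt_nonneg _) ?_
  rintro _ ⟨a, ha, b, hb, rfl⟩ _ ⟨a', ha', b', hb', rfl⟩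
  rw [Real.le_sqrt dist_nonneg (by positivity), dist_append_sq]
  gcongr
  exacts [dist_le_diam_of_mem hA ha ha', dist_le_diam_of_mem hB hb hb']

theorem volume_image2_append (A : Set (EuclideanSpace ℝ (Fin m)))
    (B : Set (EuclideanSpace ℝ (Fin n))) :
    volume (Set.image2 append A B) = volume A * volume B := by
  let e := (appendIsometry m n).symm.toMeasurableEquiv.trans (MeasurableEquiv.toLp 2 _).symm
  have he : MeasurePreserving e :=
    (WithLp.volume_preserving_ofLp _ _).comp (appendIsometry m n).symm.measurePreserving
  have hS : Set.image2 append A B = e.symm '' (A ×ˢ B) := by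
    rw [← Set.image_prod]
    congr 1
    funext p
    exact (appendIsometry_toLp p.1 p.2).symm
  rw [hS, e.image_symm, he.measure_preimage_equiv, Measure.volume_eq_prod, Measure.prod_prod]

end EuclideanSpace

theorem mul_diam_pow_le_addHaar_smul {E : Type*} [NormedAddCommGroup E] [NormedSpace ℝ E]
    [MeasurableSpace E] [BorelSpace E] [FiniteDimensional ℝ E] (μ : Measure E) [μ.IsAddHaarMeasure]
    {η : ℝ} {s : Set E} (h : η * diam s ^ Module.finrank ℝ E ≤ (μ s).toReal) (c : ℝ) :
    η * diam (c • s) ^ Module.finrank ℝ E ≤ (μ (c • s)).toReal := by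
  rw [diam_smul₀, Measure.addHaar_smul, ENNReal.toReal_mul, ENNReal.toReal_ofReal (by positivity),
    Real.norm_eq_abs, abs_pow, mul_pow, mul_left_comm]
  exact mul_le_mul_of_nonneg_left h (by positivity)

-- The constant `η̃` of the theorem is `η η' r ^ d / (r ^ 2 + 1) ^ ((d + d') / 2)` for `r ^ 2 = d / d'`.
theorem rpow_half_mul_div_mul_sqrt_pow {a b : ℕ} (hb : 0 < b) :
    (b : ℝ) ^ ((b : ℝ) / 2) * (a : ℝ) ^ ((a : ℝ) / 2) / ((a : ℝ) + b) ^ (((a : ℝ) + b) / 2) *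
      √((a : ℝ) / b + 1) ^ (a + b) = √((a : ℝ) / b) ^ a := by
  have hb : (0 : ℝ) < b := by exact_mod_cast hb
  have hab : (0 : ℝ) < a + b := by positivity
  rw [← Real.rpow_natCast, ← Real.rpow_natCast, ← Real.rpow_div_two_eq_sqrt _ (by positivity),
    ← Real.rpow_div_two_eq_sqrt _ (by positivity), div_add_one hb.ne', Nat.cast_add,
    Real.div_rpow hab.le hb.le, Real.div_rpow (Nat.cast_nonneg a) hb.le, add_div,
    Real.rpow_add hb]
  have := Real.rpow_pos_of_pos hb ((a : ℝ) / 2)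
  have := Real.rpow_pos_of_pos hb ((b : ℝ) / 2)
  have := Real.rpow_pos_of_pos hab ((a : ℝ) / 2 + (b : ℝ) / 2)
  field_simp

theorem stmt_11_general {d d' : ℕ} (hd' : 1 ≤ d')
    (η η' : ℝ) (hη : 0 < η) (hη' : 0 < η')
    (Q : Set (EuclideanSpace ℝ (Fin d))) (Q' : Set (EuclideanSpace ℝ (Fin d')))
    (Ψ : EuclideanSpace ℝ (Fin d) ≃ₗ[ℝ] EuclideanSpace ℝ (Fin d))
    (Ψ' : EuclideanSpace ℝ (Fin d') ≃ₗ[ℝ] EuclideanSpace ℝ (Fin d'))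
    (hdiam : 0 < Metric.diam (Ψ '' Q)) (hdiam' : 0 < Metric.diam (Ψ' '' Q'))
    (hvol : η * Metric.diam (Ψ '' Q) ^ d ≤ (volume (Ψ '' Q)).toReal)
    (hvol' : η' * Metric.diam (Ψ' '' Q') ^ d' ≤ (volume (Ψ' '' Q')).toReal) :
    let r : ℝ := Real.sqrt ((d : ℝ) / (d' : ℝ))
    let S : Set (EuclideanSpace ℝ (Fin (d + d'))) :=
      Set.image2 (fun x y => (WithLp.toLp 2 (Fin.append
        (((r / Metric.diam (Ψ '' Q)) • Ψ x : EuclideanSpace ℝ (Fin d)) : Fin d → ℝ)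
        ((((Metric.diam (Ψ' '' Q'))⁻¹ • Ψ' y : EuclideanSpace ℝ (Fin d')) : Fin d' → ℝ))) :
          EuclideanSpace ℝ (Fin (d + d')))) Q Q'
    η * η' * Real.rpow (d' : ℝ) ((d' : ℝ) / 2) * Real.rpow (d : ℝ) ((d : ℝ) / 2) /
        Real.rpow ((d : ℝ) + (d' : ℝ)) (((d : ℝ) + (d' : ℝ)) / 2) *
        Metric.diam S ^ (d + d') ≤ (volume S).toReal := by
  intro r S
  set D := diam (Ψ '' Q)
  set D' := diam (Ψ' '' Q')
  have hS : S = Set.image2 EuclideanSpace.append ((r / D) • (Ψ '' Q)) (D'⁻¹ • (Ψ' '' Q')) := by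
    simp only [← Set.image_smul, Set.image_image, Set.image2_image_left, Set.image2_image_right]
    rfl
  have hA : diam ((r / D) • (Ψ '' Q)) = r := by
    rw [diam_smul₀, Real.norm_eq_abs, abs_of_nonneg (by positivity), div_mul_cancel₀ _ hdiam.ne']
  have hB : diam (D'⁻¹ • (Ψ' '' Q')) = 1 := by
    rw [diam_smul₀, norm_inv, Real.norm_eq_abs, abs_of_pos hdiam', inv_mul_cancel₀ hdiam'.ne']
  have hvolA := mul_diam_pow_le_addHaar_smul volume (s := Ψ '' Q)
    (by rwa [finrank_euclideanSpace_fin]) (r / D)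
  have hvolB := mul_diam_pow_le_addHaar_smul volume (s := Ψ' '' Q')
    (by rwa [finrank_euclideanSpace_fin]) D'⁻¹
  rw [finrank_euclideanSpace_fin, hA] at hvolA
  rw [finrank_euclideanSpace_fin, hB, one_pow, mul_one] at hvolB
  -- `diam` is `0` on unbounded sets, so a positive diameter forces boundedness.
  have hbd := (not_imp_comm.1 diam_eq_zero_of_unbounded hdiam.ne').smul₀ (r / D)
  have hbd' := (not_imp_comm.1 diam_eq_zero_of_unbounded hdiam'.ne').smul₀ D'⁻¹
  have hdiamS : diam S ≤ √((d : ℝ) / d' + 1) := by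
    refine (Real.le_sqrt diam_nonneg (by positivity)).mpr ?_
    have := EuclideanSpace.diam_image2_append_sq_le hbd hbd'
    rwa [← hS, hA, hB, Real.sq_sqrt (by positivity), one_pow] at this
  simp only [Real.rpow_eq_pow]
  calc _ ≤ η * η' * (d' : ℝ) ^ ((d' : ℝ) / 2) * (d : ℝ) ^ ((d : ℝ) / 2) /
          ((d : ℝ) + d') ^ (((d : ℝ) + d') / 2) * √((d : ℝ) / d' + 1) ^ (d + d') := by
        gcongr
    _ = η * η' * r ^ d := by
        rw [← rpow_half_mul_div_mul_sqrt_pow hd']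
        ring
    _ ≤ (volume S).toReal := by
        rw [hS, EuclideanSpace.volume_image2_append, ENNReal.toReal_mul, mul_right_comm]
        exact mul_le_mul hvolA hvolB hη'.le ENNReal.toReal_nonneg

/-- Geometric core of combining coverings under Cartesian products: if `|Ψ(Q)| ≥ η diam(Ψ(Q))^d`
and `|Ψ'(Q')| ≥ η' diam(Ψ'(Q'))^{d'}`, then the map
`Ψ̃(x,y) = (r Ψ(x)/diam(Ψ(Q)), Ψ'(y)/diam(Ψ'(Q')))` with `r = √(d/d')` satisfies
`|Ψ̃(Q × Q')| ≥ η̃ diam(Ψ̃(Q × Q'))^{d+d'}` with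
`η̃ = η η' d'^{d'/2} d^{d/2} / (d+d')^{(d+d')/2}`. Here the product `ℝ^d × ℝ^{d'}` is
realised as `ℝ^{d+d'}` via `Fin.append`. -/
theorem stmt_11 {d d' : ℕ} (hd : 1 ≤ d) (hd' : 1 ≤ d')
    (η η' : ℝ) (hη : 0 < η) (hη' : 0 < η')
    (Q : Set (EuclideanSpace ℝ (Fin d))) (Q' : Set (EuclideanSpace ℝ (Fin d')))
    (hQne : Q.Nonempty) (hQ'ne : Q'.Nonempty)
    (hQbd : Bornology.IsBounded Q) (hQ'bd : Bornology.IsBounded Q')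
    (Ψ : EuclideanSpace ℝ (Fin d) ≃ₗ[ℝ] EuclideanSpace ℝ (Fin d))
    (Ψ' : EuclideanSpace ℝ (Fin d') ≃ₗ[ℝ] EuclideanSpace ℝ (Fin d'))
    (hdiam : 0 < Metric.diam (Ψ '' Q)) (hdiam' : 0 < Metric.diam (Ψ' '' Q'))
    (hvol : η * Metric.diam (Ψ '' Q) ^ d ≤ (volume (Ψ '' Q)).toReal)
    (hvol' : η' * Metric.diam (Ψ' '' Q') ^ d' ≤ (volume (Ψ' '' Q')).toReal) :
    let r : ℝ := Real.sqrt ((d : ℝ) / (d' : ℝ))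
    let S : Set (EuclideanSpace ℝ (Fin (d + d'))) :=
      Set.image2 (fun x y => (WithLp.toLp 2 (Fin.append
        (((r / Metric.diam (Ψ '' Q)) • Ψ x : EuclideanSpace ℝ (Fin d)) : Fin d → ℝ)
        ((((Metric.diam (Ψ' '' Q'))⁻¹ • Ψ' y : EuclideanSpace ℝ (Fin d')) : Fin d' → ℝ))) :
          EuclideanSpace ℝ (Fin (d + d')))) Q Q'
    η * η' * Real.rpow (d' : ℝ) ((d' : ℝ) / 2) * Real.rpow (d : ℝ) ((d : ℝ) / 2) /
        Real.rpow ((d : ℝ) + (d' : ℝ)) (((d : ℝ) + (d' : ℝ)) / 2) *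
        Metric.diam S ^ (d + d') ≤ (volume S).toReal :=
  stmt_11_general hd' η η' hη hη' Q Q' Ψ Ψ' hdiam hdiam' hvol hvol'
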